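/- arXiv:1301.4949 — 2 statements merged into one kernel-verified Lean document; each statement's English description precedes it below -/
import Mathlib

section
/- Let w = w₁ + … + w_s ∈ V with each w_k a nonzero weight vector, w_k ∈ V_{α_k} for pairwise distinct weights α_k ∈ Δ(V). If m_𝔤(exp(π(X))w) ∈ 𝔞 for every X ∈ 𝔞, then the subspace W = ℝw₁ ⊕ … ⊕ ℝw_s is a nice space; equivalently, ⟨π(Y)w_j, w_k⟩ = 0 for every root γ ∈ Δ(𝔤), every Y ∈ 𝔤_γ, and all 1 ≤ j, k ≤ s. -/
open scoped InnerProductSpace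
open Finset
open scoped Classical

/-- The (restricted) moment map of a linear family of operators `π` on an inner
product space `V`: `momentMap π v` is the unique element of `E` with
`⟪momentMap π v, Y⟫ = ⟪π Y v, v⟫ / ‖v‖²` for all `Y`. -/
noncomputable def momentMap {E V : Type*} [NormedAddCommGroup E] [InnerProductSpace ℝ E]
    [FiniteDimensional ℝ E] [NormedAddCommGroup V] [InnerProductSpace ℝ V]
    (π : E →ₗ[ℝ] V →L[ℝ] V) (v : V) : E :=
  (InnerProductSpace.toDual ℝ E).symm <| LinearMap.toContinuousLinearMap
    { toFun := fun X => ⟪(π X) v, v⟫_ℝ / ‖v‖ ^ 2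
      map_add' := fun X Y => by
        simp [map_add, ContinuousLinearMap.add_apply, inner_add_left, add_div]
      map_smul' := fun c X => by
        simp [map_smul, ContinuousLinearMap.smul_apply, inner_smul_left, mul_div_assoc] }

/-- The weight space `V_α = {v : ∀ X ∈ 𝔞, π(X)v = ⟪α,X⟫v}`. -/
def wtSpace {E V : Type*} [NormedAddCommGroup E] [InnerProductSpace ℝ E]
    [NormedAddCommGroup V] [InnerProductSpace ℝ V]
    (π : E →ₗ[ℝ] V →L[ℝ] V) (𝔞 : Submodule ℝ E) (α : E) : Submodule ℝ V where
  carrier := {v | ∀ X ∈ 𝔞, (π X) v = ⟪α, X⟫_ℝ • v}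
  add_mem' := fun {a b} ha hb X hX => by rw [map_add, ha X hX, hb X hX, smul_add]
  zero_mem' := fun X hX => by simp
  smul_mem' := fun t a ha X hX => by rw [map_smul, ha X hX, smul_comm]

/-- The (restricted) root space `𝔤_γ = {Y : ∀ X ∈ 𝔞, [X,Y] = ⟪γ,X⟫Y}`. -/
def rootSpace {E : Type*} [NormedAddCommGroup E] [InnerProductSpace ℝ E]
    (bk : E →ₗ[ℝ] E →ₗ[ℝ] E) (𝔞 : Submodule ℝ E) (γ : E) : Submodule ℝ E where
  carrier := {Y | ∀ X ∈ 𝔞, bk X Y = ⟪γ, X⟫_ℝ • Y}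
  add_mem' := fun {a b} ha hb X hX => by rw [map_add, ha X hX, hb X hX, smul_add]
  zero_mem' := fun X hX => by simp
  smul_mem' := fun t a ha X hX => by rw [map_smul, ha X hX, smul_comm]

/-- A subspace `W ⊆ V` is `A`-invariant if `π(X)W ⊆ W` for all `X ∈ 𝔞`. -/
def AInvariant {E V : Type*} [NormedAddCommGroup E] [InnerProductSpace ℝ E]
    [NormedAddCommGroup V] [InnerProductSpace ℝ V]
    (π : E →ₗ[ℝ] V →L[ℝ] V) (𝔞 : Submodule ℝ E) (W : Submodule ℝ V) : Prop :=
  ∀ X ∈ 𝔞, ∀ w ∈ W, (π X) w ∈ W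

/-- An `A`-invariant subspace `W ⊆ V` is a nice space if `momentMap π w ∈ 𝔞` for
every nonzero `w ∈ W`. -/
def IsNiceSpace {E V : Type*} [NormedAddCommGroup E] [InnerProductSpace ℝ E]
    [FiniteDimensional ℝ E] [NormedAddCommGroup V] [InnerProductSpace ℝ V]
    (π : E →ₗ[ℝ] V →L[ℝ] V) (𝔞 : Submodule ℝ E) (W : Submodule ℝ V) : Prop :=
  AInvariant π 𝔞 W ∧ ∀ w ∈ W, w ≠ 0 → momentMap π w ∈ 𝔞

/-!
For `X ∈ 𝔞`, `exp (π X) w = ∑ₖ exp ⟪αₖ, X⟫ • wₖ`, and `m(exp (π X) w) ∈ 𝔞 ⊥ 𝔤_γ` says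
`∑_{j,k} ⟪π Y wⱼ, wₖ⟫ exp ⟪αⱼ + αₖ, X⟫ = 0` for all `X ∈ 𝔞`. The characters `exp ⟪β, ·⟫` of `𝔞`
are linearly independent (Dedekind), so the coefficients vanish on each fibre `αⱼ + αₖ = β`.
Since `π Y wⱼ` has weight `αⱼ + γ`, only pairs with `αₖ = αⱼ + γ` contribute, and such a pair is
determined by `αⱼ + αₖ`; hence `⟪π Y wⱼ, wₖ⟫ = 0`. By bilinearity `m(u) ⊥ 𝔤_γ` for all `u ∈ W`,
skew-adjointness gives `m(u) ⊥ 𝔪`, and the orthogonal decomposition of `𝔤` forces `m(u) ∈ 𝔞`.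
-/

theorem LinearIndependent.sum_fiber_eq_zero {R M ι κ : Type*} [Ring R] [AddCommGroup M]
    [Module R M] [Fintype ι] {v : κ → M} (hv : LinearIndependent R v) {g : ι → κ} {c : ι → R}
    (h : ∑ i, c i • v (g i) = 0) (i₀ : ι) : ∑ i with g i = g i₀, c i = 0 := by
  refine linearIndependent_iff'.1 hv (univ.image g) (fun b => ∑ i with g i = b, c i) ?_ (g i₀)
    (mem_image_of_mem g (mem_univ i₀))
  refine (sum_image' (fun i => c i • v (g i)) fun i _ => ?_).trans h
  rw [sum_smul]
  exact sum_congr rfl fun j hj => by rw [(mem_filter.1 hj).2]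

section Characters

variable {E : Type*} [NormedAddCommGroup E] [InnerProductSpace ℝ E] (𝔞 : Submodule ℝ E)

noncomputable def expChar (β : 𝔞) : Multiplicative 𝔞 →* ℝ where
  toFun X := Real.exp ⟪(β : E), (X.toAdd : E)⟫_ℝ
  map_one' := by simp
  map_mul' X Y := by simp [inner_add_right, Real.exp_add]

theorem expChar_injective : Function.Injective (expChar 𝔞) := by
  intro β δ h
  have h' := DFunLike.congr_fun h (Multiplicative.ofAdd (β - δ))
  simp only [expChar, MonoidHom.coe_mk, OneHom.coe_mk, toAdd_ofAdd, Real.exp_eq_exp] at h'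
  rw [← sub_eq_zero, ← inner_sub_left, Submodule.coe_sub, inner_self_eq_zero] at h'
  exact sub_eq_zero.1 (Subtype.ext h')

variable {𝔞}

theorem sum_fiber_eq_zero_of_sum_mul_exp_inner_eq_zero {ι : Type*} [Fintype ι] {f : ι → E}
    (hf : ∀ i, f i ∈ 𝔞) {c : ι → ℝ} (h : ∀ X ∈ 𝔞, ∑ i, c i * Real.exp ⟪f i, X⟫_ℝ = 0)
    (i₀ : ι) : ∑ i with f i = f i₀, c i = 0 := by
  have hli : LinearIndependent ℝ fun β : 𝔞 => (expChar 𝔞 β : Multiplicative 𝔞 → ℝ) :=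
    (linearIndependent_monoidHom (Multiplicative 𝔞) ℝ).comp _ (expChar_injective 𝔞)
  have hsum := hli.sum_fiber_eq_zero (g := fun i => ⟨f i, hf i⟩) (c := c) (by
    funext X
    simpa [expChar, Finset.sum_apply] using h _ (Multiplicative.toAdd X).2) i₀
  simpa only [Subtype.mk.injEq] using hsum

end Characters

theorem NormedSpace.exp_apply_of_apply_eq_smul {V : Type*} [NormedAddCommGroup V]
    [NormedSpace ℝ V] [CompleteSpace V] {A : V →L[ℝ] V} {v : V} {c : ℝ} (h : A v = c • v) :
    exp A v = Real.exp c • v := by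
  have hpow : ∀ n : ℕ, (A ^ n) v = c ^ n • v := by
    intro n
    induction n with
    | zero => simp
    | succ n ih =>
      rw [pow_succ, pow_succ, mul_apply_eq_comp, h, map_smul, ih, smul_smul, mul_comm]
  have hA := (exp_series_hasSum_exp' (𝕂 := ℝ) A).mapL (ContinuousLinearMap.apply ℝ V v)
  have hc := (exp_series_hasSum_exp' (𝕂 := ℝ) c).smul_const v
  rw [← Real.exp_eq_exp_ℝ] at hc
  refine hA.unique ?_
  convert hc using 2 with n
  rw [ContinuousLinearMap.apply_apply, smul_apply, hpow, smul_smul, smul_eq_mul]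

theorem Submodule.mem_of_isOrtho_of_sup_eq_top {𝕜 E : Type*} [RCLike 𝕜] [NormedAddCommGroup E]
    [InnerProductSpace 𝕜 E] {K L : Submodule 𝕜 E} (hKL : K ⟂ L) (htop : K ⊔ L = ⊤) {x : E}
    (hx : (𝕜 ∙ x) ⟂ L) : x ∈ K := by
  obtain ⟨y, hy, z, hz, rfl⟩ := Submodule.mem_sup.1 (htop ▸ Submodule.mem_top : x ∈ K ⊔ L)
  have hz0 : z = 0 := by
    have := hx.symm.inner_eq hz (Submodule.mem_span_singleton_self _)
    rwa [inner_add_right, hKL.symm.inner_eq hz hy, zero_add, inner_self_eq_zero] at this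
  simpa [hz0] using hy

theorem inner_apply_eq_zero_of_mem_span_range {V ι : Type*} [NormedAddCommGroup V]
    [InnerProductSpace ℝ V] [Fintype ι] {T : V →L[ℝ] V} {v : ι → V}
    (h : ∀ j k, ⟪T (v j), v k⟫_ℝ = 0) {x y : V} (hx : x ∈ Submodule.span ℝ (Set.range v))
    (hy : y ∈ Submodule.span ℝ (Set.range v)) : ⟪T x, y⟫_ℝ = 0 := by
  obtain ⟨c, rfl⟩ := (Submodule.mem_span_range_iff_exists_fun ℝ).1 hx
  obtain ⟨d, rfl⟩ := (Submodule.mem_span_range_iff_exists_fun ℝ).1 hy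
  simp [map_sum, sum_inner, inner_sum, real_inner_smul_left, real_inner_smul_right, h]

section WeightVectors

variable {E V : Type*} [NormedAddCommGroup E] [InnerProductSpace ℝ E] [NormedAddCommGroup V]
  [InnerProductSpace ℝ V] {π : E →ₗ[ℝ] V →L[ℝ] V} {𝔞 : Submodule ℝ E}

theorem inner_momentMap [FiniteDimensional ℝ E] (v : V) (Y : E) :
    ⟪momentMap π v, Y⟫_ℝ = ⟪π Y v, v⟫_ℝ / ‖v‖ ^ 2 := by
  rw [momentMap, InnerProductSpace.toDual_symm_apply]
  rfl

theorem inner_momentMap_eq_zero_iff [FiniteDimensional ℝ E] {v : V} {Y : E} :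
    ⟪momentMap π v, Y⟫_ℝ = 0 ↔ ⟪π Y v, v⟫_ℝ = 0 := by
  rw [inner_momentMap, div_eq_zero_iff, pow_eq_zero_iff two_ne_zero, norm_eq_zero]
  constructor
  · rintro (h | rfl)
    · exact h
    · simp
  · exact Or.inl

theorem inner_eq_zero_of_mem_wtSpace (hsa : ∀ X ∈ 𝔞, ∀ v w : V, ⟪π X v, w⟫_ℝ = ⟪v, π X w⟫_ℝ)
    {β δ : E} (hβ : β ∈ 𝔞) (hδ : δ ∈ 𝔞) (hne : β ≠ δ) {u v : V} (hu : u ∈ wtSpace π 𝔞 β)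
    (hv : v ∈ wtSpace π 𝔞 δ) : ⟪u, v⟫_ℝ = 0 := by
  have hX : β - δ ∈ 𝔞 := 𝔞.sub_mem hβ hδ
  have h := hsa _ hX u v
  rw [hu _ hX, hv _ hX, real_inner_smul_left, real_inner_smul_right, ← sub_eq_zero, ← sub_mul,
    ← inner_sub_left, real_inner_self_eq_norm_sq] at h
  exact (mul_eq_zero.1 h).resolve_left (pow_ne_zero 2 (norm_ne_zero_iff.2 (sub_ne_zero.2 hne)))

theorem apply_mem_wtSpace_add {bk : E →ₗ[ℝ] E →ₗ[ℝ] E}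
    (hrep : ∀ X Y : E, π (bk X Y) = π X * π Y - π Y * π X) {α γ Y : E} {v : V}
    (hY : Y ∈ rootSpace bk 𝔞 γ) (hv : v ∈ wtSpace π 𝔞 α) : π Y v ∈ wtSpace π 𝔞 (α + γ) := by
  intro X hX
  have h := DFunLike.congr_fun (hrep X Y) v
  rw [hY X hX, map_smul, sub_apply, mul_apply_eq_comp, mul_apply_eq_comp,
    hv X hX, map_smul, smul_apply] at h
  rw [inner_add_left, add_smul, h]
  abel

theorem aInvariant_span_range {ι : Type*} {a : ι → E} {wv : ι → V}
    (hwv : ∀ k, wv k ∈ wtSpace π 𝔞 (a k)) : AInvariant π 𝔞 (Submodule.span ℝ (Set.range wv)) := by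
  intro X hX u hu
  induction hu using Submodule.span_induction with
  | mem x hx =>
    obtain ⟨k, rfl⟩ := hx
    rw [hwv k X hX]
    exact Submodule.smul_mem _ _ (Submodule.subset_span ⟨k, rfl⟩)
  | zero => simp
  | add x y _ _ hx hy => simpa using Submodule.add_mem _ hx hy
  | smul c x _ hx => simpa using Submodule.smul_mem _ c hx

theorem inner_apply_exp_apply_sum [CompleteSpace V] {ι : Type*} [Fintype ι] {a : ι → E}
    {wv : ι → V} (hwv : ∀ k, wv k ∈ wtSpace π 𝔞 (a k)) (T : V →L[ℝ] V) {X : E} (hX : X ∈ 𝔞) :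
    ⟪T (NormedSpace.exp (π X) (∑ k, wv k)), NormedSpace.exp (π X) (∑ k, wv k)⟫_ℝ =
      ∑ p : ι × ι, ⟪T (wv p.1), wv p.2⟫_ℝ * Real.exp ⟪a p.1 + a p.2, X⟫_ℝ := by
  simp only [map_sum, NormedSpace.exp_apply_of_apply_eq_smul (hwv _ X hX), map_smul, sum_inner,
    inner_sum, real_inner_smul_left, real_inner_smul_right, inner_add_left, Real.exp_add]
  rw [Fintype.sum_prod_type, sum_comm]
  exact sum_congr rfl fun j _ => sum_congr rfl fun k _ => by ring

theorem inner_apply_eq_zero_of_forall_inner_exp [CompleteSpace V] {bk : E →ₗ[ℝ] E →ₗ[ℝ] E}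
    (hrep : ∀ X Y : E, π (bk X Y) = π X * π Y - π Y * π X)
    (hsa : ∀ X ∈ 𝔞, ∀ v w : V, ⟪π X v, w⟫_ℝ = ⟪v, π X w⟫_ℝ) {ι : Type*} [Fintype ι]
    {a : ι → E} (ha : Function.Injective a) (ha𝔞 : ∀ k, a k ∈ 𝔞) {wv : ι → V}
    (hwv : ∀ k, wv k ∈ wtSpace π 𝔞 (a k)) {γ Y : E} (hγ : γ ∈ 𝔞) (hY : Y ∈ rootSpace bk 𝔞 γ)
    (h : ∀ X ∈ 𝔞,
      ⟪π Y (NormedSpace.exp (π X) (∑ k, wv k)), NormedSpace.exp (π X) (∑ k, wv k)⟫_ℝ = 0)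
    (j k : ι) : ⟪π Y (wv j), wv k⟫_ℝ = 0 := by
  have hshift : ∀ p : ι × ι, ⟪π Y (wv p.1), wv p.2⟫_ℝ ≠ 0 → a p.2 = a p.1 + γ :=
    fun p hp => by_contra fun hne => hp <| inner_eq_zero_of_mem_wtSpace hsa
      (𝔞.add_mem (ha𝔞 _) hγ) (ha𝔞 _) (Ne.symm hne) (apply_mem_wtSpace_add hrep hY (hwv _)) (hwv _)
  by_contra hjk
  have hfiber := sum_fiber_eq_zero_of_sum_mul_exp_inner_eq_zero
    (f := fun p : ι × ι => a p.1 + a p.2) (fun p => 𝔞.add_mem (ha𝔞 _) (ha𝔞 _))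
    (fun X hX => (inner_apply_exp_apply_sum hwv _ hX).symm.trans (h X hX)) (j, k)
  -- in the fibre of `a j + a k`, only `(j, k)` itself can pair weights differing by `γ`
  rw [sum_eq_single (j, k)] at hfiber
  · exact hjk hfiber
  · intro p hp hpjk
    by_contra hp0
    have hp2 := hshift p hp0
    have hk := hshift (j, k) hjk
    have hsum : a p.1 + a p.2 = a j + a k := (mem_filter.1 hp).2
    have hp1 : a p.1 = a j := smul_right_injective E (r := (2 : ℝ)) two_ne_zero <| by
      linear_combination (norm := module) hsum - hp2 + hk
    exact hpjk (Prod.ext (ha hp1) (ha (by rw [hp2, hk, hp1])))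
  · simp

end WeightVectors

theorem niceElement_span_isNice_general
    {𝔤 V : Type*} [NormedAddCommGroup 𝔤] [InnerProductSpace ℝ 𝔤] [FiniteDimensional ℝ 𝔤]
    [NormedAddCommGroup V] [InnerProductSpace ℝ V] [FiniteDimensional ℝ V]
    -- the Lie bracket of `𝔤` and the representation `π : 𝔤 → 𝔤𝔩(V)`:
    (bk : 𝔤 →ₗ[ℝ] 𝔤 →ₗ[ℝ] 𝔤)
    (π : 𝔤 →ₗ[ℝ] V →L[ℝ] V)
    (hrep : ∀ X Y : 𝔤, π (bk X Y) = π X * π Y - π Y * π X)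
    -- `𝔞` is an abelian subalgebra acting by self-adjoint operators:
    (𝔞 : Submodule ℝ 𝔤)
    (hsa : ∀ X ∈ 𝔞, ∀ v w : V, ⟪(π X) v, w⟫_ℝ = ⟪v, (π X) w⟫_ℝ)
    -- roots and weights:
    (Δ𝔤 : Finset 𝔤) (hΔ𝔤 : ∀ γ ∈ Δ𝔤, γ ∈ 𝔞 ∧ γ ≠ 0)
    (ΔV : Finset 𝔤) (hΔV : ∀ α ∈ ΔV, α ∈ 𝔞)
    -- `𝔤₀ = 𝔞 ⊕ 𝔪` is the centralizer of `𝔞`, `π` is skew-adjoint on `𝔪`: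
    (𝔪 : Submodule ℝ 𝔤)
    (hskew : ∀ Y ∈ 𝔪, ∀ v w : V, ⟪(π Y) v, w⟫_ℝ = -⟪v, (π Y) w⟫_ℝ)
    (h𝔞𝔪 : ∀ X ∈ 𝔞, ∀ Y ∈ 𝔪, ⟪X, Y⟫_ℝ = 0)
    -- the orthogonal restricted-root space decomposition of `𝔤`:
    (h𝔤dec : (𝔞 ⊔ 𝔪) ⊔ (⨆ γ ∈ Δ𝔤, rootSpace bk 𝔞 γ) = ⊤)
    (h𝔤orth : ∀ γ ∈ Δ𝔤, ∀ Y ∈ rootSpace bk 𝔞 γ, ∀ Z : 𝔤,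
      (Z ∈ 𝔞 ⊔ 𝔪 ∨ ∃ γ' ∈ Δ𝔤, γ' ≠ γ ∧ Z ∈ rootSpace bk 𝔞 γ') → ⟪Y, Z⟫_ℝ = 0)
    (s : ℕ) (wv : Fin s → V) (a : Fin s → 𝔤)
    (ha_inj : Function.Injective a) (haΔ : ∀ k, a k ∈ ΔV)
    (hwv : ∀ k, wv k ∈ wtSpace π 𝔞 (a k))
    (w : V) (hw : w = ∑ k, wv k)
    (hmm : ∀ X ∈ 𝔞, momentMap π ((NormedSpace.exp (π X)) w) ∈ 𝔞)
    :
    IsNiceSpace π 𝔞 (Submodule.span ℝ (Set.range wv)) ∧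
    ∀ γ ∈ Δ𝔤, ∀ Y ∈ rootSpace bk 𝔞 γ, ∀ j k : Fin s, ⟪(π Y) (wv j), wv k⟫_ℝ = 0 := by
  have hroot : ∀ γ ∈ Δ𝔤, ∀ Y ∈ rootSpace bk 𝔞 γ, ∀ j k : Fin s, ⟪(π Y) (wv j), wv k⟫_ℝ = 0 := by
    intro γ hγ Y hY
    refine inner_apply_eq_zero_of_forall_inner_exp hrep hsa ha_inj (fun k => hΔV _ (haΔ k)) hwv
      (hΔ𝔤 γ hγ).1 hY fun X hX => ?_
    rw [← hw, ← inner_momentMap_eq_zero_iff, real_inner_comm]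
    exact h𝔤orth γ hγ Y hY _ (.inl (Submodule.mem_sup_left (hmm X hX)))
  refine ⟨⟨aInvariant_span_range hwv, fun u hu _ => ?_⟩, hroot⟩
  have h𝔞_perp : 𝔞 ⟂ 𝔪 ⊔ ⨆ γ ∈ Δ𝔤, rootSpace bk 𝔞 γ :=
    Submodule.isOrtho_sup_right.2 ⟨Submodule.isOrtho_iff_inner_eq.2 h𝔞𝔪,
      Submodule.isOrtho_iSup_right.2 fun γ => Submodule.isOrtho_iSup_right.2 fun hγ =>
        (Submodule.isOrtho_iff_inner_eq.2 fun Y hY X hX =>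
          h𝔤orth γ hγ Y hY X (.inl (Submodule.mem_sup_left hX))).symm⟩
  have hm_perp : 𝔪 ⊔ ⨆ γ ∈ Δ𝔤, rootSpace bk 𝔞 γ ≤ (ℝ ∙ momentMap π u)ᗮ := by
    refine sup_le (fun Z hZ => ?_) (iSup₂_le fun γ hγ Y hY => ?_) <;>
      rw [Submodule.mem_orthogonal_singleton_iff_inner_right, inner_momentMap_eq_zero_iff]
    · linarith [hskew Z hZ u u, real_inner_comm u (π Z u)]
    · exact inner_apply_eq_zero_of_mem_span_range (hroot γ hγ Y hY) hu hu
  exact Submodule.mem_of_isOrtho_of_sup_eq_top h𝔞_perp (by rw [← sup_assoc]; exact h𝔤dec)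
    (Submodule.isOrtho_iff_le.2 hm_perp).symm

/-- if `w = w₁ + … + w_s` is a sum of nonzero weight vectors for pairwise
distinct weights and `m_𝔤(exp(π X)w) ∈ 𝔞` for every `X ∈ 𝔞`, then
`W = ℝw₁ ⊕ … ⊕ ℝw_s` is a nice space; equivalently `⟪π(Y)w_j, w_k⟫ = 0` for every
root `γ`, every `Y ∈ 𝔤_γ` and all `j, k`. -/
theorem niceElement_span_isNice
    {𝔤 V : Type*} [NormedAddCommGroup 𝔤] [InnerProductSpace ℝ 𝔤] [FiniteDimensional ℝ 𝔤]
    [NormedAddCommGroup V] [InnerProductSpace ℝ V] [FiniteDimensional ℝ V]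
    -- the Lie bracket of `𝔤` and the representation `π : 𝔤 → 𝔤𝔩(V)`:
    (bk : 𝔤 →ₗ[ℝ] 𝔤 →ₗ[ℝ] 𝔤)
    (hbk_alt : ∀ X : 𝔤, bk X X = 0)
    (hbk_jac : ∀ X Y Z : 𝔤, bk X (bk Y Z) + bk Y (bk Z X) + bk Z (bk X Y) = 0)
    (π : 𝔤 →ₗ[ℝ] V →L[ℝ] V)
    (hrep : ∀ X Y : 𝔤, π (bk X Y) = π X * π Y - π Y * π X)
    -- `𝔞` is an abelian subalgebra acting by self-adjoint operators:
    (𝔞 : Submodule ℝ 𝔤)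
    (hab : ∀ X ∈ 𝔞, ∀ Y ∈ 𝔞, bk X Y = 0)
    (hsa : ∀ X ∈ 𝔞, ∀ v w : V, ⟪(π X) v, w⟫_ℝ = ⟪v, (π X) w⟫_ℝ)
    -- roots and weights:
    (Δ𝔤 : Finset 𝔤) (hΔ𝔤 : ∀ γ ∈ Δ𝔤, γ ∈ 𝔞 ∧ γ ≠ 0)
    (ΔV : Finset 𝔤) (hΔV : ∀ α ∈ ΔV, α ∈ 𝔞)
    -- `𝔤₀ = 𝔞 ⊕ 𝔪` is the centralizer of `𝔞`, `π` is skew-adjoint on `𝔪`: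
    (𝔪 : Submodule ℝ 𝔤)
    (hskew : ∀ Y ∈ 𝔪, ∀ v w : V, ⟪(π Y) v, w⟫_ℝ = -⟪v, (π Y) w⟫_ℝ)
    (h𝔞𝔪 : ∀ X ∈ 𝔞, ∀ Y ∈ 𝔪, ⟪X, Y⟫_ℝ = 0)
    (h𝔤₀ : ∀ Z : 𝔤, (∀ X ∈ 𝔞, bk X Z = 0) ↔ Z ∈ 𝔞 ⊔ 𝔪)
    -- the orthogonal restricted-root space decomposition of `𝔤`:
    (h𝔤dec : (𝔞 ⊔ 𝔪) ⊔ (⨆ γ ∈ Δ𝔤, rootSpace bk 𝔞 γ) = ⊤)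
    (h𝔤orth : ∀ γ ∈ Δ𝔤, ∀ Y ∈ rootSpace bk 𝔞 γ, ∀ Z : 𝔤,
      (Z ∈ 𝔞 ⊔ 𝔪 ∨ ∃ γ' ∈ Δ𝔤, γ' ≠ γ ∧ Z ∈ rootSpace bk 𝔞 γ') → ⟪Y, Z⟫_ℝ = 0)
    -- the weight space decomposition of `V`:
    (hVdec : (⨆ α ∈ ΔV, wtSpace π 𝔞 α) = ⊤)
    (s : ℕ) (wv : Fin s → V) (a : Fin s → 𝔤)
    (ha_inj : Function.Injective a) (haΔ : ∀ k, a k ∈ ΔV)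
    (hwv : ∀ k, wv k ∈ wtSpace π 𝔞 (a k)) (hwv0 : ∀ k, wv k ≠ 0)
    (w : V) (hw : w = ∑ k, wv k)
    (hmm : ∀ X ∈ 𝔞, momentMap π ((NormedSpace.exp (π X)) w) ∈ 𝔞)
    :
    IsNiceSpace π 𝔞 (Submodule.span ℝ (Set.range wv)) ∧
    ∀ γ ∈ Δ𝔤, ∀ Y ∈ rootSpace bk 𝔞 γ, ∀ j k : Fin s, ⟪(π Y) (wv j), wv k⟫_ℝ = 0 :=
  niceElement_span_isNice_general bk π hrep 𝔞 hsa Δ𝔤 hΔ𝔤 ΔV hΔV 𝔪 hskew h𝔞𝔪 h𝔤dec h𝔤orth s wv a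
    ha_inj haΔ hwv w hw hmm
end

section
/- Let α_i, α_j ∈ Δ(V) be weights with V_{α_i} ≠ 0 and V_{α_j} ≠ 0 such that W = V_{α_i} ⊕ V_{α_j} is a nice space, and set β = mcc({α_i, α_j}). Then there exists a nonzero v ∈ V with m_𝔤(v) = β and π(β)v = ‖β‖² v; that is, the set of critical points of the norm squared of the moment map whose moment map value equals β is nonempty (β defines a stratum). -/
open scoped InnerProductSpace
open Finset
open scoped Classical

lemma mem_wtSpace {E V : Type*} [NormedAddCommGroup E] [InnerProductSpace ℝ E]
    [NormedAddCommGroup V] [InnerProductSpace ℝ V]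
    {π : E →ₗ[ℝ] V →L[ℝ] V} {𝔞 : Submodule ℝ E} {α : E} {v : V} :
    v ∈ wtSpace π 𝔞 α ↔ ∀ X ∈ 𝔞, (π X) v = ⟪α, X⟫_ℝ • v := Iff.rfl

lemma momentMap_inner' {E V : Type*} [NormedAddCommGroup E] [InnerProductSpace ℝ E]
    [FiniteDimensional ℝ E] [NormedAddCommGroup V] [InnerProductSpace ℝ V]
    (π : E →ₗ[ℝ] V →L[ℝ] V) (v : V) (Y : E) :
    ⟪momentMap π v, Y⟫_ℝ = ⟪(π Y) v, v⟫_ℝ / ‖v‖ ^ 2 := by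
  simp [momentMap, InnerProductSpace.toDual_symm_apply]

/-- if `W = V_{α_i} ⊕ V_{α_j}` is a nice space then
`β = mcc({α_i, α_j})` defines a stratum: there is a nonzero `v` with `m_𝔤(v) = β`
and `π(β)v = ‖β‖²v`. -/
theorem mcc_of_two_weights_defines_stratum
    {𝔤 V : Type*} [NormedAddCommGroup 𝔤] [InnerProductSpace ℝ 𝔤] [FiniteDimensional ℝ 𝔤]
    [NormedAddCommGroup V] [InnerProductSpace ℝ V] [FiniteDimensional ℝ V]
    -- the Lie bracket of `𝔤` and the representation `π : 𝔤 → 𝔤𝔩(V)`: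
    (bk : 𝔤 →ₗ[ℝ] 𝔤 →ₗ[ℝ] 𝔤)
    (hbk_alt : ∀ X : 𝔤, bk X X = 0)
    (hbk_jac : ∀ X Y Z : 𝔤, bk X (bk Y Z) + bk Y (bk Z X) + bk Z (bk X Y) = 0)
    (π : 𝔤 →ₗ[ℝ] V →L[ℝ] V)
    (hrep : ∀ X Y : 𝔤, π (bk X Y) = π X * π Y - π Y * π X)
    -- `𝔞` is an abelian subalgebra acting by self-adjoint operators:
    (𝔞 : Submodule ℝ 𝔤)
    (hab : ∀ X ∈ 𝔞, ∀ Y ∈ 𝔞, bk X Y = 0)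
    (hsa : ∀ X ∈ 𝔞, ∀ v w : V, ⟪(π X) v, w⟫_ℝ = ⟪v, (π X) w⟫_ℝ)
    -- roots and weights:
    (Δ𝔤 : Finset 𝔤) (hΔ𝔤 : ∀ γ ∈ Δ𝔤, γ ∈ 𝔞 ∧ γ ≠ 0)
    (ΔV : Finset 𝔤) (hΔV : ∀ α ∈ ΔV, α ∈ 𝔞)
    -- `𝔤₀ = 𝔞 ⊕ 𝔪` is the centralizer of `𝔞`, `π` is skew-adjoint on `𝔪`:
    (𝔪 : Submodule ℝ 𝔤)
    (hskew : ∀ Y ∈ 𝔪, ∀ v w : V, ⟪(π Y) v, w⟫_ℝ = -⟪v, (π Y) w⟫_ℝ)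
    (h𝔞𝔪 : ∀ X ∈ 𝔞, ∀ Y ∈ 𝔪, ⟪X, Y⟫_ℝ = 0)
    (h𝔤₀ : ∀ Z : 𝔤, (∀ X ∈ 𝔞, bk X Z = 0) ↔ Z ∈ 𝔞 ⊔ 𝔪)
    -- the orthogonal restricted-root space decomposition of `𝔤`:
    (h𝔤dec : (𝔞 ⊔ 𝔪) ⊔ (⨆ γ ∈ Δ𝔤, rootSpace bk 𝔞 γ) = ⊤)
    (h𝔤orth : ∀ γ ∈ Δ𝔤, ∀ Y ∈ rootSpace bk 𝔞 γ, ∀ Z : 𝔤,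
      (Z ∈ 𝔞 ⊔ 𝔪 ∨ ∃ γ' ∈ Δ𝔤, γ' ≠ γ ∧ Z ∈ rootSpace bk 𝔞 γ') → ⟪Y, Z⟫_ℝ = 0)
    -- the weight space decomposition of `V`:
    (hVdec : (⨆ α ∈ ΔV, wtSpace π 𝔞 α) = ⊤)
    (αi αj : 𝔤) (hαi : αi ∈ ΔV) (hαj : αj ∈ ΔV)
    (hVαi : wtSpace π 𝔞 αi ≠ ⊥) (hVαj : wtSpace π 𝔞 αj ≠ ⊥)
    (hnice : IsNiceSpace π 𝔞 (wtSpace π 𝔞 αi ⊔ wtSpace π 𝔞 αj))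
    -- `β` is the point of minimal norm in the convex hull of `{α_i, α_j}`:
    (β : 𝔤) (hβ₁ : β ∈ convexHull ℝ ({αi, αj} : Set 𝔤))
    (hβ₂ : ∀ y ∈ convexHull ℝ ({αi, αj} : Set 𝔤), ‖β‖ ≤ ‖y‖)
    :
    ∃ v : V, v ≠ 0 ∧ momentMap π v = β ∧ (π β) v = (‖β‖ ^ 2) • v := by
  classical
  -- extract nonzero weight vectors and normalize them
  obtain ⟨vi, hvi_mem, hvi0⟩ := (Submodule.ne_bot_iff _).mp hVαi
  obtain ⟨vj, hvj_mem, hvj0⟩ := (Submodule.ne_bot_iff _).mp hVαj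
  obtain ⟨ui, hui_def⟩ : ∃ ui : V, ui = ‖vi‖⁻¹ • vi := ⟨_, rfl⟩
  obtain ⟨uj, huj_def⟩ : ∃ uj : V, uj = ‖vj‖⁻¹ • vj := ⟨_, rfl⟩
  have hui_mem : ui ∈ wtSpace π 𝔞 αi := hui_def ▸ Submodule.smul_mem _ _ hvi_mem
  have huj_mem : uj ∈ wtSpace π 𝔞 αj := huj_def ▸ Submodule.smul_mem _ _ hvj_mem
  have hπi := mem_wtSpace.mp hui_mem
  have hπj := mem_wtSpace.mp huj_mem
  have hui1 : ‖ui‖ = 1 := by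
    rw [hui_def, norm_smul, norm_inv, norm_norm,
      inv_mul_cancel₀ (norm_ne_zero_iff.mpr hvi0)]
  have huj1 : ‖uj‖ = 1 := by
    rw [huj_def, norm_smul, norm_inv, norm_norm,
      inv_mul_cancel₀ (norm_ne_zero_iff.mpr hvj0)]
  have hii : ⟪ui, ui⟫_ℝ = 1 := by rw [real_inner_self_eq_norm_sq, hui1]; norm_num
  have hjj : ⟪uj, uj⟫_ℝ = 1 := by rw [real_inner_self_eq_norm_sq, huj1]; norm_num
  -- express β as a convex combination
  rw [convexHull_pair] at hβ₁ hβ₂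
  obtain ⟨t, u, ht, hu, htu, hβeq⟩ := hβ₁
  have hαi𝔞 := hΔV αi hαi
  have hαj𝔞 := hΔV αj hαj
  have hβ𝔞 : β ∈ 𝔞 := by
    rw [← hβeq]
    exact Submodule.add_mem _ (Submodule.smul_mem _ _ hαi𝔞) (Submodule.smul_mem _ _ hαj𝔞)
  -- minimality of ‖β‖ gives the variational inequality
  have hseg : β ∈ segment ℝ αi αj := ⟨t, u, ht, hu, htu, hβeq⟩
  have hmin : ∀ y ∈ segment ℝ αi αj, 0 ≤ ⟪β, y - β⟫_ℝ := by
    have hconv : Convex ℝ (segment ℝ αi αj) := convex_segment _ _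
    have hne : Nonempty (segment ℝ αi αj) := ⟨⟨β, hseg⟩⟩
    have hinf : ‖(0:𝔤) - β‖ = ⨅ w : segment ℝ αi αj, ‖(0:𝔤) - (w:𝔤)‖ := by
      refine le_antisymm ?_ ?_
      · refine le_ciInf fun w => ?_
        simpa using hβ₂ w w.2
      · have hb : BddBelow (Set.range fun w : segment ℝ αi αj => ‖(0:𝔤) - (w:𝔤)‖) :=
          ⟨0, by rintro x ⟨w, rfl⟩; positivity⟩
        exact ciInf_le hb ⟨β, hseg⟩
    intro y hy
    have h := (norm_eq_iInf_iff_real_inner_le_zero hconv hseg).mp hinf y hy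
    rw [zero_sub, inner_neg_left] at h
    linarith
  have hi_nn : 0 ≤ ⟪β, αi - β⟫_ℝ := hmin αi (left_mem_segment ℝ αi αj)
  have hj_nn : 0 ≤ ⟪β, αj - β⟫_ℝ := hmin αj (right_mem_segment ℝ αi αj)
  have hsum : t * ⟪β, αi - β⟫_ℝ + u * ⟪β, αj - β⟫_ℝ = 0 := by
    have hz : t • (αi - β) + u • (αj - β) = 0 := by
      have h1 : t • β + u • β = β := by rw [← add_smul, htu, one_smul]
      rw [smul_sub, smul_sub, sub_add_sub_comm, hβeq, h1, sub_self]
    have h2 : ⟪β, t • (αi - β) + u • (αj - β)⟫_ℝ = 0 := by rw [hz, inner_zero_right]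
    rwa [inner_add_right, real_inner_smul_right, real_inner_smul_right] at h2
  have hti : t * ⟪β, αi - β⟫_ℝ = 0 := by
    have := mul_nonneg ht hi_nn
    have := mul_nonneg hu hj_nn
    linarith
  have htj : u * ⟪β, αj - β⟫_ℝ = 0 := by
    have := mul_nonneg ht hi_nn
    have := mul_nonneg hu hj_nn
    linarith
  have hci : Real.sqrt t * ⟪αi, β⟫_ℝ = Real.sqrt t * ‖β‖ ^ 2 := by
    rcases eq_or_lt_of_le ht with h0 | h0
    · rw [← h0, Real.sqrt_zero, zero_mul, zero_mul]
    · have h1 : ⟪β, αi - β⟫_ℝ = 0 := by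
        rcases mul_eq_zero.mp hti with h | h
        · exact absurd h h0.ne'
        · exact h
      rw [inner_sub_right] at h1
      have h2 : ⟪αi, β⟫_ℝ = ‖β‖ ^ 2 := by
        rw [real_inner_comm, ← real_inner_self_eq_norm_sq β]
        linarith
      rw [h2]
  have hcj : Real.sqrt u * ⟪αj, β⟫_ℝ = Real.sqrt u * ‖β‖ ^ 2 := by
    rcases eq_or_lt_of_le hu with h0 | h0
    · rw [← h0, Real.sqrt_zero, zero_mul, zero_mul]
    · have h1 : ⟪β, αj - β⟫_ℝ = 0 := by
        rcases mul_eq_zero.mp htj with h | h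
        · exact absurd h h0.ne'
        · exact h
      rw [inner_sub_right] at h1
      have h2 : ⟪αj, β⟫_ℝ = ‖β‖ ^ 2 := by
        rw [real_inner_comm, ← real_inner_self_eq_norm_sq β]
        linarith
      rw [h2]
  -- it suffices to find a unit vector in W with the right properties
  suffices h : ∃ v : V, ‖v‖ = 1 ∧ v ∈ wtSpace π 𝔞 αi ⊔ wtSpace π 𝔞 αj ∧
      (∀ X ∈ 𝔞, ⟪(π X) v, v⟫_ℝ = ⟪β, X⟫_ℝ) ∧ (π β) v = (‖β‖ ^ 2) • v by
    obtain ⟨v, hv1, hvW, hπXv, hπβv⟩ := h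
    have hv0 : v ≠ 0 := by
      intro h0
      rw [h0, norm_zero] at hv1
      norm_num at hv1
    refine ⟨v, hv0, ?_, hπβv⟩
    have hm𝔞 : momentMap π v ∈ 𝔞 := hnice.2 v hvW hv0
    have key : ∀ X ∈ 𝔞, ⟪momentMap π v - β, X⟫_ℝ = 0 := by
      intro X hX
      rw [inner_sub_left, momentMap_inner', hv1, hπXv X hX]
      norm_num
    have h2 := key _ (Submodule.sub_mem _ hm𝔞 hβ𝔞)
    rwa [inner_self_eq_zero, sub_eq_zero] at h2
  by_cases hij : αi = αj
  · -- degenerate case: both weights equal, β = αi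
    subst hij
    have hβi : β = αi := by rw [← hβeq, ← add_smul, htu, one_smul]
    subst hβi
    refine ⟨ui, hui1, Submodule.mem_sup_left hui_mem, fun X hX => ?_, ?_⟩
    · rw [hπi X hX, real_inner_smul_left, hii, mul_one]
    · rw [hπi β hβ𝔞, real_inner_self_eq_norm_sq]
  · -- main case: distinct weights; the weight spaces are orthogonal
    have hort : ⟪ui, uj⟫_ℝ = 0 := by
      have hd𝔞 : αi - αj ∈ 𝔞 := Submodule.sub_mem _ hαi𝔞 hαj𝔞
      have h1 := hsa (αi - αj) hd𝔞 ui uj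
      rw [hπi (αi - αj) hd𝔞, hπj (αi - αj) hd𝔞, real_inner_smul_left,
        real_inner_smul_right] at h1
      have h2 : ⟪αi - αj, αi - αj⟫_ℝ * ⟪ui, uj⟫_ℝ = 0 := by
        rw [inner_sub_left]
        linear_combination h1
      have h3 : ⟪αi - αj, αi - αj⟫_ℝ ≠ 0 := fun h =>
        (sub_ne_zero.mpr hij) (inner_self_eq_zero.mp h)
      exact (mul_eq_zero.mp h2).resolve_left h3
    have hort' : ⟪uj, ui⟫_ℝ = 0 := by rw [real_inner_comm]; exact hort
    obtain ⟨s, hs_def⟩ : ∃ s : ℝ, s = Real.sqrt t := ⟨_, rfl⟩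
    obtain ⟨s', hs'_def⟩ : ∃ s' : ℝ, s' = Real.sqrt u := ⟨_, rfl⟩
    rw [← hs_def] at hci
    rw [← hs'_def] at hcj
    have hs2 : s ^ 2 = t := by rw [hs_def]; exact Real.sq_sqrt ht
    have hs'2 : s' ^ 2 = u := by rw [hs'_def]; exact Real.sq_sqrt hu
    obtain ⟨v, hv_def⟩ : ∃ v : V, v = s • ui + s' • uj := ⟨_, rfl⟩
    have hvnorm : ‖v‖ ^ 2 = 1 := by
      rw [hv_def, norm_add_sq_real, norm_smul, norm_smul, real_inner_smul_left,
        real_inner_smul_right, hort, hui1, huj1]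
      simp only [mul_one, mul_zero, add_zero, Real.norm_eq_abs, sq_abs]
      rw [hs2, hs'2]
      linarith
    have hv1 : ‖v‖ = 1 := by
      have h := congrArg Real.sqrt hvnorm
      rwa [Real.sqrt_sq (norm_nonneg _), Real.sqrt_one] at h
    have hπv : ∀ X ∈ 𝔞, (π X) v = (s * ⟪αi, X⟫_ℝ) • ui + (s' * ⟪αj, X⟫_ℝ) • uj := by
      intro X hX
      rw [hv_def, map_add, map_smul, map_smul, hπi X hX, hπj X hX, smul_smul, smul_smul]
    refine ⟨v, hv1, ?_, fun X hX => ?_, ?_⟩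
    · rw [hv_def]
      exact Submodule.add_mem _
        (Submodule.mem_sup_left (Submodule.smul_mem _ _ hui_mem))
        (Submodule.mem_sup_right (Submodule.smul_mem _ _ huj_mem))
    · have hβX : ⟪β, X⟫_ℝ = t * ⟪αi, X⟫_ℝ + u * ⟪αj, X⟫_ℝ := by
        rw [← hβeq, inner_add_left, real_inner_smul_left, real_inner_smul_left]
      rw [hπv X hX, hv_def, hβX]
      simp only [inner_add_left, inner_add_right, real_inner_smul_left,
        real_inner_smul_right, hii, hjj, hort, hort', mul_one, mul_zero, add_zero, zero_add]
      linear_combination ⟪αi, X⟫_ℝ * hs2 + ⟪αj, X⟫_ℝ * hs'2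
    · rw [hπv β hβ𝔞, hv_def, smul_add, smul_smul, smul_smul,
        show (‖β‖ ^ 2) * s = s * ⟪αi, β⟫_ℝ by rw [hci]; ring,
        show (‖β‖ ^ 2) * s' = s' * ⟪αj, β⟫_ℝ by rw [hcj]; ring]
end
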